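/- Let d ≥ 3 and let φ be a C^d function on an interval containing s_1 ≤ s_2 ≤ … ≤ s_d. Let 𝒥_d(s; φ) be the determinant of the d×d matrix whose j-th column is (1, s_j, …, s_j^{d−2}/(d−2)!, φ′(s_j))^T. Then 𝒥_d(s; φ) = ∫_{s_1}^{s_2} … ∫_{s_{d−1}}^{s_d} 𝒥_{d−1}(σ_1,…,σ_{d−1}; φ′) dσ_{d−1} … dσ_1. -/

import Mathlib

open MeasureTheory

/-- `𝒥_d(s;φ)`: determinant of the `d×d` matrix whose `j`-th column is
`(1, s_j, s_j²/2!, …, s_j^{d-2}/(d-2)!, φ'(s_j))ᵀ`. -/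
noncomputable def Jdet (d : ℕ) (φ : ℝ → ℝ) (s : Fin d → ℝ) : ℝ :=
  Matrix.det (Matrix.of fun i j : Fin d =>
    if (i : ℕ) + 1 < d then (s j) ^ (i : ℕ) / (Nat.factorial i) else deriv φ (s j))

/-- Iterated integral, the `j`-th variable running from `s j` to `s (j+1)`. -/
noncomputable def iterInt : (k : ℕ) → ((Fin k → ℝ) → ℝ) → (Fin (k + 1) → ℝ) → ℝ
  | 0, f, _ => f (fun i => i.elim0)
  | (k + 1), f, s =>
      ∫ x in (s 0)..(s 1), iterInt k (fun u => f (Fin.cons x u)) (fun i => s i.succ)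

/-! Differentiating the first `j` columns of `𝒥_d` gives `∂_1⋯∂_j 𝒥_d`. Since the determinant is
linear in each column, integrating the `(j+1)`-st differentiated column from `s_{j+1}` to `s_{j+2}`
returns, by the fundamental theorem of calculus, `-∂_1⋯∂_j 𝒥_d`: the upper limit produces two equal
columns. Peeling the iterated integral from the innermost variable outwards therefore gives
`∫⋯∫ ∂_1⋯∂_{d-1} 𝒥_d = (-1)^{d-1} 𝒥_d(s)`, and expanding `∂_1⋯∂_{d-1} 𝒥_d` along its first row,
which is zero except for a `1` in the last column, gives `(-1)^{d-1} 𝒥_{d-1}(·; φ')`. -/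

open Set

namespace iterInt

theorem succ_eq_snoc :
    ∀ (k : ℕ) (f : (Fin (k + 1) → ℝ) → ℝ) (t : Fin (k + 2) → ℝ),
      iterInt (k + 1) f t =
        iterInt k (fun u => ∫ x in t (Fin.last k).castSucc..t (Fin.last (k + 1)), f (Fin.snoc u x))
          (fun i => t i.castSucc)
  | 0, f, t => by
    simp only [iterInt]
    congr! 2 with x
    congr 1
    funext i
    rw [Fin.fin_one_eq_zero i]
    rfl
  | k + 1, f, t => by
    rw [iterInt, iterInt]
    congr 1
    funext x
    rw [succ_eq_snoc k]
    simp only [Fin.cons_snoc_eq_snoc_cons]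
    rfl

theorem const_mul (c : ℝ) :
    ∀ (k : ℕ) (f : (Fin k → ℝ) → ℝ) (s : Fin (k + 1) → ℝ),
      iterInt k (fun u => c * f u) s = c * iterInt k f s
  | 0, _, _ => rfl
  | k + 1, f, s => by
    simp only [iterInt, const_mul c k, intervalIntegral.integral_const_mul]

end iterInt

section DetColumn

variable {n : Type*} [Fintype n] [DecidableEq n]

theorem Matrix.hasDerivAt_det_updateCol (M : Matrix n n ℝ) (j : n) {c : ℝ → n → ℝ}
    {c' : n → ℝ} {x : ℝ} (hc : HasDerivAt c c' x) :
    HasDerivAt (fun t => (M.updateCol j (c t)).det) (M.updateCol j c').det x :=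
  let L : (n → ℝ) →ₗ[ℝ] ℝ :=
    { toFun := fun v => (M.updateCol j v).det
      map_add' := M.det_updateCol_add j
      map_smul' := M.det_updateCol_smul j }
  L.toContinuousLinearMap.hasFDerivAt.comp_hasDerivAt x hc

theorem Matrix.integral_det_updateCol (M : Matrix n n ℝ) (j : n) {c c' : ℝ → n → ℝ} {a b : ℝ}
    (hc : ∀ x ∈ uIcc a b, HasDerivAt c (c' x) x) (hc' : ContinuousOn c' (uIcc a b)) :
    ∫ x in a..b, (M.updateCol j (c' x)).det =
      (M.updateCol j (c b)).det - (M.updateCol j (c a)).det :=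
  intervalIntegral.integral_eq_sub_of_hasDerivAt
    (fun x hx => M.hasDerivAt_det_updateCol j (hc x hx))
    ((continuous_const.matrix_updateCol j continuous_id).matrix_det.comp_continuousOn
      hc').intervalIntegrable

end DetColumn

theorem hasDerivAt_pow_succ_div_factorial (k : ℕ) (x : ℝ) :
    HasDerivAt (fun t : ℝ => t ^ (k + 1) / (k + 1).factorial) (x ^ k / k.factorial) x := by
  refine ((hasDerivAt_pow (k + 1) x).div_const _).congr_deriv ?_
  rw [Nat.factorial_succ, Nat.cast_mul]
  field_simp
  push_cast
  ring

namespace Jdet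

variable (d : ℕ) (φ : ℝ → ℝ)

noncomputable def column (t : ℝ) (i : Fin d) : ℝ :=
  if (i : ℕ) + 1 < d then t ^ (i : ℕ) / (i : ℕ).factorial else deriv φ t

noncomputable def columnDeriv (t : ℝ) (i : Fin d) : ℝ :=
  if (i : ℕ) + 1 < d then (if (i : ℕ) = 0 then 0 else t ^ ((i : ℕ) - 1) / ((i : ℕ) - 1).factorial)
  else deriv (deriv φ) t

-- `(mixedMatrix d φ s j v).det` is the paper's `∂_1⋯∂_j 𝒥_d(v_1, …, v_j, s_{j+1}, …, s_d)`.
noncomputable def mixedMatrix (s : Fin d → ℝ) (j : ℕ) (v : Fin j → ℝ) :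
    Matrix (Fin d) (Fin d) ℝ :=
  Matrix.of fun i c => if h : (c : ℕ) < j then columnDeriv d φ (v ⟨c, h⟩) i else column d φ (s c) i

variable {d φ}

theorem hasDerivAt_column {x : ℝ} (hφ : HasDerivAt (deriv φ) (deriv (deriv φ) x) x) :
    HasDerivAt (column d φ) (columnDeriv d φ x) x := by
  refine hasDerivAt_pi.2 fun i => ?_
  unfold column columnDeriv
  split_ifs with hi hi0
  · simpa [hi0] using hasDerivAt_const x (1 : ℝ)
  · obtain ⟨k, hk⟩ := Nat.exists_eq_succ_of_ne_zero hi0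
    simpa [hk] using hasDerivAt_pow_succ_div_factorial k x
  · exact hφ

theorem continuousOn_columnDeriv {S : Set ℝ} (hφ : ContinuousOn (deriv (deriv φ)) S) :
    ContinuousOn (columnDeriv d φ) S := by
  refine continuousOn_pi.2 fun i => ?_
  unfold columnDeriv
  split_ifs
  · exact continuousOn_const
  · exact (continuous_pow _).continuousOn.div_const _
  · exact hφ

theorem columnDeriv_succ (t : ℝ) (i : Fin d) :
    columnDeriv (d + 1) φ t i.succ = column d (deriv φ) t i := by
  simp [column, columnDeriv]

section

variable (s : Fin d → ℝ) {j : ℕ}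

theorem det_mixedMatrix_zero (v : Fin 0 → ℝ) : (mixedMatrix d φ s 0 v).det = Jdet d φ s := by
  simp [mixedMatrix, Jdet, column]

theorem mixedMatrix_succ_snoc (hj : j < d) (u : Fin j → ℝ) (x : ℝ) :
    mixedMatrix d φ s (j + 1) (Fin.snoc u x) =
      (mixedMatrix d φ s j u).updateCol ⟨j, hj⟩ (columnDeriv d φ x) := by
  ext i c
  rcases lt_trichotomy (c : ℕ) j with hc | hc | hc
  · have hne : c ≠ ⟨j, hj⟩ := Fin.ne_of_val_ne hc.ne
    simp [mixedMatrix, hne, hc, hc.le, Fin.snoc]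
  · obtain rfl : c = ⟨j, hj⟩ := Fin.ext hc
    simp [mixedMatrix, Fin.snoc]
  · have hne : c ≠ ⟨j, hj⟩ := Fin.ne_of_val_ne hc.ne'
    simp [mixedMatrix, hne, hc.not_gt, hc.not_ge]

theorem updateCol_mixedMatrix_self (hj : j < d) (u : Fin j → ℝ) :
    (mixedMatrix d φ s j u).updateCol ⟨j, hj⟩ (column d φ (s ⟨j, hj⟩)) = mixedMatrix d φ s j u := by
  ext i c
  by_cases hc : c = ⟨j, hj⟩
  · subst hc
    simp [mixedMatrix]
  · simp [hc]

theorem det_updateCol_mixedMatrix_succ (hj : j + 1 < d) (u : Fin j → ℝ) :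
    ((mixedMatrix d φ s j u).updateCol ⟨j, j.lt_succ_self.trans hj⟩
      (column d φ (s ⟨j + 1, hj⟩))).det = 0 :=
  Matrix.det_zero_of_column_eq (i := ⟨j, j.lt_succ_self.trans hj⟩) (j := ⟨j + 1, hj⟩)
    (by simp [Fin.ext_iff]) fun i => by simp [mixedMatrix, Fin.ext_iff]

theorem integral_det_mixedMatrix_snoc {U : Set ℝ} (hU : U.OrdConnected)
    (hφ' : ∀ x ∈ U, HasDerivAt (deriv φ) (deriv (deriv φ) x) x)
    (hφ'' : ContinuousOn (deriv (deriv φ)) U) (hs : ∀ c, s c ∈ U) (hj : j + 1 < d)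
    (u : Fin j → ℝ) :
    ∫ x in s ⟨j, j.lt_succ_self.trans hj⟩..s ⟨j + 1, hj⟩,
        (mixedMatrix d φ s (j + 1) (Fin.snoc u x)).det =
      -(mixedMatrix d φ s j u).det := by
  have hsub := hU.uIcc_subset (hs ⟨j, j.lt_succ_self.trans hj⟩) (hs ⟨j + 1, hj⟩)
  simp_rw [mixedMatrix_succ_snoc s (j.lt_succ_self.trans hj)]
  rw [Matrix.integral_det_updateCol _ _ (fun x hx => hasDerivAt_column (hφ' x (hsub hx)))
    (continuousOn_columnDeriv (hφ''.mono hsub)), det_updateCol_mixedMatrix_succ,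
    updateCol_mixedMatrix_self, zero_sub]

theorem iterInt_det_mixedMatrix {U : Set ℝ} (hU : U.OrdConnected)
    (hφ' : ∀ x ∈ U, HasDerivAt (deriv φ) (deriv (deriv φ) x) x)
    (hφ'' : ContinuousOn (deriv (deriv φ)) U) (hs : ∀ c, s c ∈ U) :
    ∀ (j : ℕ) (hj : j < d), iterInt j (fun v => (mixedMatrix d φ s j v).det)
      (fun i => s (Fin.castLE hj i)) = (-1) ^ j * Jdet d φ s
  | 0, _ => by rw [pow_zero, one_mul]; exact det_mixedMatrix_zero s _
  | j + 1, hj => by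
    have step (u : Fin j → ℝ) : ∫ x in s ⟨j, j.lt_succ_self.trans hj⟩..s ⟨j + 1, hj⟩,
        (mixedMatrix d φ s (j + 1) (Fin.snoc u x)).det = -1 * (mixedMatrix d φ s j u).det := by
      rw [neg_one_mul]
      exact integral_det_mixedMatrix_snoc s hU hφ' hφ'' hs hj u
    calc _ = iterInt j (fun u => -1 * (mixedMatrix d φ s j u).det)
          (fun i => s (Fin.castLE (Nat.lt_of_succ_lt hj) i)) := by
          rw [iterInt.succ_eq_snoc]
          exact congrArg (iterInt j · _) (funext step)
      _ = (-1) ^ (j + 1) * Jdet d φ s := by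
          rw [iterInt.const_mul, iterInt_det_mixedMatrix hU hφ' hφ'' hs j, pow_succ,
            mul_comm _ (-1 : ℝ), mul_assoc]

end

theorem det_mixedMatrix_last {e : ℕ} (he : 1 ≤ e) (s : Fin (e + 1) → ℝ) (v : Fin e → ℝ) :
    (mixedMatrix (e + 1) φ s e v).det = (-1) ^ e * Jdet e (deriv φ) v := by
  rw [Matrix.det_succ_row_zero, Finset.sum_eq_single (Fin.last e)]
  · have hminor : (mixedMatrix (e + 1) φ s e v).submatrix Fin.succ (Fin.last e).succAbove =
        Matrix.of fun i c => column e (deriv φ) (v c) i := by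
      ext i c
      simp [mixedMatrix, columnDeriv_succ]
    rw [hminor]
    simp [mixedMatrix, column, Jdet, Nat.pos_iff_ne_zero.mp he]
  · intro c _ hc
    simp [mixedMatrix, columnDeriv, Fin.val_lt_last hc, Nat.pos_iff_ne_zero.mp he]
  · simp

theorem succ_eq_iterInt {e : ℕ} (he : 1 ≤ e) {U : Set ℝ} (hU : IsOpen U) (hU' : U.OrdConnected)
    (hφ : ContDiffOn ℝ 2 φ U) (s : Fin (e + 1) → ℝ) (hs : ∀ c, s c ∈ U) :
    Jdet (e + 1) φ s = iterInt e (Jdet e (deriv φ)) s := by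
  have hφ' : ContDiffOn ℝ 1 (deriv φ) U := hφ.deriv_of_isOpen hU (by norm_num)
  have hder (x : ℝ) (hx : x ∈ U) : HasDerivAt (deriv φ) (deriv (deriv φ) x) x :=
    ((hφ'.differentiableOn one_ne_zero).differentiableAt (hU.mem_nhds hx)).hasDerivAt
  have key := iterInt_det_mixedMatrix s hU' hder (hφ'.continuousOn_deriv_of_isOpen hU le_rfl) hs
    e e.lt_succ_self
  simp only [det_mixedMatrix_last he, iterInt.const_mul, Fin.castLE_refl] at key
  exact (mul_left_cancel₀ (pow_ne_zero e (neg_ne_zero.2 one_ne_zero)) key).symm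

end Jdet

theorem stmt4_general (m : ℕ) (φ : ℝ → ℝ) (A B : ℝ)
    (hφ : ContDiffOn ℝ (m + 3) φ (Set.Ioo A B))
    (s : Fin (m + 3) → ℝ) (hmem : ∀ j, s j ∈ Set.Ioo A B) :
    Jdet (m + 3) φ s = iterInt (m + 2) (fun σ => Jdet (m + 2) (deriv φ) σ) s :=
  Jdet.succ_eq_iterInt (by omega) isOpen_Ioo ordConnected_Ioo (hφ.of_le (by norm_cast; omega))
    s hmem

/-- for `d = m+3 ≥ 3` and `φ` of class `C^d` on an interval containing
`s_1 ≤ … ≤ s_d`, one has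
`𝒥_d(s;φ) = ∫_{s_1}^{s_2} ⋯ ∫_{s_{d-1}}^{s_d} 𝒥_{d-1}(σ;φ') dσ_{d-1} ⋯ dσ_1`. -/
theorem stmt4 (m : ℕ) (φ : ℝ → ℝ) (A B : ℝ)
    (hφ : ContDiffOn ℝ (m + 3) φ (Set.Ioo A B))
    (s : Fin (m + 3) → ℝ) (hs : Monotone s) (hmem : ∀ j, s j ∈ Set.Ioo A B) :
    Jdet (m + 3) φ s = iterInt (m + 2) (fun σ => Jdet (m + 2) (deriv φ) σ) s :=
  stmt4_general m φ A B hφ s hmem
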